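/- Fix a real number r with r > 1 and define, for p, q ∈ (0,1) with p·q < 1/r, h(p,q) = log(2p(1−q)) − log( √((1−p)² + 4p(1−q)(1/r − p·q)) − (1−p) ). Then for every p, q ∈ (0,1) with p·q < 1/r, the derivative d of the map p ↦ h(p,q) at p satisfies: d < 0 if q < 1/(r+1); d = 0 if q = 1/(r+1); and d > 0 if q > 1/(r+1). -/

import Mathlib

set_option maxHeartbeats 1600000 in
theorem stmt_10 (r : ℝ) (hr : 1 < r) :
    ∀ p q : ℝ, 0 < p → p < 1 → 0 < q → q < 1 → p * q < 1 / r →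
      (q < 1 / (r + 1) →
        deriv (fun x : ℝ => Real.log (2 * x * (1 - q)) -
          Real.log (Real.sqrt ((1 - x) ^ 2 + 4 * x * (1 - q) * (1 / r - x * q)) - (1 - x))) p
          < 0) ∧
      (q = 1 / (r + 1) →
        deriv (fun x : ℝ => Real.log (2 * x * (1 - q)) -
          Real.log (Real.sqrt ((1 - x) ^ 2 + 4 * x * (1 - q) * (1 / r - x * q)) - (1 - x))) p
          = 0) ∧
      (1 / (r + 1) < q →
        0 < deriv (fun x : ℝ => Real.log (2 * x * (1 - q)) -
          Real.log (Real.sqrt ((1 - x) ^ 2 + 4 * x * (1 - q) * (1 / r - x * q)) - (1 - x))) p) := by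
  intro p q hp hp1 hq hq1 hpq
  have hr0 : (0:ℝ) < r := by linarith
  have hrne : r ≠ 0 := ne_of_gt hr0
  have hr1 : (0:ℝ) < r + 1 := by linarith
  have h1q : (0:ℝ) < 1 - q := by linarith
  have h1p : (0:ℝ) < 1 - p := by linarith
  have hC : 0 < 1 / r - p * q := by linarith
  have h4 : 0 < 4 * p * (1 - q) * (1 / r - p * q) := by positivity
  have hApos : 0 < (1 - p) ^ 2 + 4 * p * (1 - q) * (1 / r - p * q) := by positivity
  have hu2 : (Real.sqrt ((1 - p) ^ 2 + 4 * p * (1 - q) * (1 / r - p * q))) ^ 2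
      = (1 - p) ^ 2 + 4 * p * (1 - q) * (1 / r - p * q) := Real.sq_sqrt hApos.le
  have hu0 : 0 ≤ Real.sqrt ((1 - p) ^ 2 + 4 * p * (1 - q) * (1 / r - p * q)) :=
    Real.sqrt_nonneg _
  have hugt : 1 - p < Real.sqrt ((1 - p) ^ 2 + 4 * p * (1 - q) * (1 / r - p * q)) := by
    nlinarith [hu2, hu0, h4]
  have hupos : 0 < Real.sqrt ((1 - p) ^ 2 + 4 * p * (1 - q) * (1 / r - p * q)) := by linarith
  have hdpos : 0 < Real.sqrt ((1 - p) ^ 2 + 4 * p * (1 - q) * (1 / r - p * q)) - (1 - p) := by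
    linarith
  -- derivative computation
  have hx : HasDerivAt (fun x : ℝ => 1 - x) (-1) p := by
    simpa using (hasDerivAt_const p (1:ℝ)).fun_sub (hasDerivAt_id p)
  have hsq : HasDerivAt (fun x : ℝ => (1 - x) ^ 2) (2 * (1 - p) * (-1)) p := by
    simpa using hx.fun_pow 2
  have h2a : HasDerivAt (fun x : ℝ => 4 * x * (1 - q)) (4 * (1 - q)) p := by
    simpa using ((hasDerivAt_id p).const_mul (4:ℝ)).mul_const (1 - q)
  have h2b : HasDerivAt (fun x : ℝ => 1 / r - x * q) (-q) p := by
    simpa using (hasDerivAt_const p (1/r)).fun_sub ((hasDerivAt_id p).mul_const q)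
  have hAder : HasDerivAt (fun x : ℝ => (1 - x) ^ 2 + 4 * x * (1 - q) * (1 / r - x * q))
      (2 * (1 - p) * (-1) + (4 * (1 - q) * (1 / r - p * q) + 4 * p * (1 - q) * (-q))) p :=
    hsq.add (h2a.mul h2b)
  have hsqrt : HasDerivAt (fun x : ℝ => Real.sqrt ((1 - x) ^ 2 + 4 * x * (1 - q) * (1 / r - x * q)))
      ((2 * (1 - p) * (-1) + (4 * (1 - q) * (1 / r - p * q) + 4 * p * (1 - q) * (-q))) /
        (2 * Real.sqrt ((1 - p) ^ 2 + 4 * p * (1 - q) * (1 / r - p * q)))) p :=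
    hAder.sqrt hApos.ne'
  have hinner : HasDerivAt (fun x : ℝ =>
      Real.sqrt ((1 - x) ^ 2 + 4 * x * (1 - q) * (1 / r - x * q)) - (1 - x))
      ((2 * (1 - p) * (-1) + (4 * (1 - q) * (1 / r - p * q) + 4 * p * (1 - q) * (-q))) /
        (2 * Real.sqrt ((1 - p) ^ 2 + 4 * p * (1 - q) * (1 / r - p * q))) - (-1)) p :=
    hsqrt.sub hx
  have hlog2 : HasDerivAt (fun x : ℝ =>
      Real.log (Real.sqrt ((1 - x) ^ 2 + 4 * x * (1 - q) * (1 / r - x * q)) - (1 - x)))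
      (((2 * (1 - p) * (-1) + (4 * (1 - q) * (1 / r - p * q) + 4 * p * (1 - q) * (-q))) /
        (2 * Real.sqrt ((1 - p) ^ 2 + 4 * p * (1 - q) * (1 / r - p * q))) - (-1)) /
        (Real.sqrt ((1 - p) ^ 2 + 4 * p * (1 - q) * (1 / r - p * q)) - (1 - p))) p :=
    hinner.log hdpos.ne'
  have h1a : HasDerivAt (fun x : ℝ => 2 * x * (1 - q)) (2 * (1 - q)) p := by
    simpa using ((hasDerivAt_id p).const_mul (2:ℝ)).mul_const (1 - q)
  have hval : 2 * p * (1 - q) ≠ 0 := by positivity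
  have hlog1 : HasDerivAt (fun x : ℝ => Real.log (2 * x * (1 - q)))
      (2 * (1 - q) / (2 * p * (1 - q))) p := h1a.log hval
  have hF := (hlog1.fun_sub hlog2).deriv
  -- rewrite derivative into signed form
  have halg : ∀ u : ℝ, 1 - p < u →
      u ^ 2 = (1 - p) ^ 2 + 4 * p * (1 - q) * (1 / r - p * q) →
      2 * (1 - q) / (2 * p * (1 - q)) -
        ((2 * (1 - p) * (-1) + (4 * (1 - q) * (1 / r - p * q) + 4 * p * (1 - q) * (-q))) /
          (2 * u) - (-1)) / (u - (1 - p))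
      = ((1 - p) + 2 * p * (1 - q) * (1 / r) - u) / (p * u * (u - (1 - p))) := by
    intro u hugt' hu2'
    have hu0' : 0 < u := by linarith
    have h1 : u - (1 - p) ≠ 0 := by intro hc; rw [sub_eq_zero] at hc; linarith
    have h2 : (1:ℝ) - q ≠ 0 := ne_of_gt h1q
    have hL : 2 * (1 - q) / (2 * p * (1 - q)) -
        ((2 * (1 - p) * (-1) + (4 * (1 - q) * (1 / r - p * q) + 4 * p * (1 - q) * (-q))) /
          (2 * u) - (-1)) / (u - (1 - p))
        = (2 * u ^ 2 - 2 * u - p * (2 * (1 - p) * (-1) +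
            (4 * (1 - q) * (1 / r - p * q) + 4 * p * (1 - q) * (-q)))) /
          (2 * (p * u * (u - (1 - p)))) := by
      field_simp
      ring
    rw [hL]
    have hnum : 2 * u ^ 2 - 2 * u - p * (2 * (1 - p) * (-1) +
        (4 * (1 - q) * (1 / r - p * q) + 4 * p * (1 - q) * (-q)))
        = 2 * ((1 - p) + 2 * p * (1 - q) * (1 / r) - u) := by
      linear_combination 2 * hu2'
    rw [hnum, mul_div_mul_left _ _ (two_ne_zero)]
  have hkey : deriv (fun x : ℝ => Real.log (2 * x * (1 - q)) -
      Real.log (Real.sqrt ((1 - x) ^ 2 + 4 * x * (1 - q) * (1 / r - x * q)) - (1 - x))) p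
      = ((1 - p) + 2 * p * (1 - q) * (1 / r) -
          Real.sqrt ((1 - p) ^ 2 + 4 * p * (1 - q) * (1 / r - p * q))) /
        (p * Real.sqrt ((1 - p) ^ 2 + 4 * p * (1 - q) * (1 / r - p * q)) *
          (Real.sqrt ((1 - p) ^ 2 + 4 * p * (1 - q) * (1 / r - p * q)) - (1 - p))) := by
    rw [hF]
    exact halg _ hugt hu2
  have hm : 0 < p * Real.sqrt ((1 - p) ^ 2 + 4 * p * (1 - q) * (1 / r - p * q)) *
      (Real.sqrt ((1 - p) ^ 2 + 4 * p * (1 - q) * (1 / r - p * q)) - (1 - p)) :=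
    mul_pos (mul_pos hp hupos) hdpos
  have hVpos : 0 < (1 - p) + 2 * p * (1 - q) * (1 / r) := by positivity
  have hgap : r ^ 2 * (((1 - p) + 2 * p * (1 - q) * (1 / r)) ^ 2 -
      ((1 - p) ^ 2 + 4 * p * (1 - q) * (1 / r - p * q)))
      = 4 * p ^ 2 * (1 - q) * (r - 1) * (q * (r + 1) - 1) := by
    field_simp
    ring
  obtain ⟨u, hU⟩ : ∃ u, Real.sqrt ((1 - p) ^ 2 + 4 * p * (1 - q) * (1 / r - p * q)) = u :=
    ⟨_, rfl⟩
  rw [hU] at hkey hu2 hu0 hugt hupos hdpos hm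
  have hrm1 : (0:ℝ) < r - 1 := by linarith
  obtain ⟨V, hVdef⟩ : ∃ V, (1 - p) + 2 * p * (1 - q) * (1 / r) = V := ⟨_, rfl⟩
  obtain ⟨A, hAdef⟩ : ∃ A, (1 - p) ^ 2 + 4 * p * (1 - q) * (1 / r - p * q) = A := ⟨_, rfl⟩
  rw [hVdef] at hkey hgap hVpos
  rw [hAdef] at hu2 hgap
  refine ⟨?_, ?_, ?_⟩
  · intro hqlt
    have hq1' : q * (r + 1) < 1 := by
      rw [lt_div_iff₀ hr1] at hqlt; linarith
    have hneg : 4 * p ^ 2 * (1 - q) * (r - 1) * (q * (r + 1) - 1) < 0 := by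
      have hpos : 0 < 4 * p ^ 2 * (1 - q) * (r - 1) := by positivity
      exact mul_neg_of_pos_of_neg hpos (by linarith)
    have hVA : V ^ 2 <
        A := by
      nlinarith [hgap, hneg, mul_pos hr0 hr0]
    have hVu : V < u := by
      nlinarith [hu2, hu0, hVA, hVpos]
    rw [hkey]
    exact div_neg_of_neg_of_pos (by linarith) hm
  · intro hqeq
    have hq1' : q * (r + 1) = 1 := by
      rw [hqeq]; field_simp
    have h0 : r ^ 2 * (V ^ 2 -
        (A)) = 0 := by
      rw [hgap, hq1']; ring
    have hVA : V ^ 2 =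
        A := by
      have hr2 : (r:ℝ) ^ 2 ≠ 0 := pow_ne_zero 2 hrne
      have := (mul_eq_zero.mp h0).resolve_left hr2
      linarith [sub_eq_zero.mp this]
    have huV : u = V := by
      have hz : (u - (V)) *
          (u + (V)) = 0 := by
        linear_combination hu2 - hVA
      rcases mul_eq_zero.mp hz with h | h
      · linarith [sub_eq_zero.mp h]
      · linarith
    rw [hkey, huV, sub_self, zero_div]
  · intro hqgt
    have hq1' : 1 < q * (r + 1) := by
      rw [div_lt_iff₀ hr1] at hqgt; linarith
    have hposg : 0 < 4 * p ^ 2 * (1 - q) * (r - 1) * (q * (r + 1) - 1) := by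
      have hpos : 0 < 4 * p ^ 2 * (1 - q) * (r - 1) := by positivity
      exact mul_pos hpos (by linarith)
    have hVA : A <
        V ^ 2 := by
      nlinarith [hgap, hposg, mul_pos hr0 hr0]
    have hVu : u < V := by
      nlinarith [hu2, hu0, hVA, hVpos]
    rw [hkey]
    exact div_pos (by linarith) hm
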